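/- arXiv:2105.07555 — 2 statements merged into one kernel-verified Lean document; each statement's English description precedes it below -/
import Mathlib

section
/- Suppose X and Y are real-valued random variables whose conditional distribution functions F_{X|Z}(·|z) and F_{Y|Z}(·|z) are continuous for every value z of Z, and Z has continuous distribution function F_Z. Then for any strictly monotone functions m₁, m₂, m₃ : ℝ → ℝ, ρ(m₁(X), m₂(Y) | m₃(Z)) = ρ(X, Y | Z). -/
open MeasureTheory ProbabilityTheory Real Set

noncomputable def S₀ (a b : ℝ) : ℝ :=
  Real.exp (-|a - b|) + Real.exp (-a) + Real.exp (a - 1) +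
    Real.exp (-b) + Real.exp (b - 1) + 2 * Real.exp (-1) - 4

/-!
The transforms `U`, `V`, `W` are probability integral transforms. A strictly increasing change
of variables leaves each of them unchanged, and a strictly decreasing one replaces it by `1 - ·`
almost surely; here continuity of the (conditional) distribution functions is what rules out
atoms, which would otherwise shift the value by the mass of the atom. So the law of
`(U', V', W')` is the push-forward of the law of `(U, V, W)` under a coordinatewise map of the
form `u ↦ u` or `u ↦ 1 - u`, and the integrand of `ρ` is invariant under such maps:
`S₀ (1 - a) (1 - b) = S₀ a b` and `|(1 - a) - (1 - b)| = |a - b|`.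
-/

open Filter

lemma S₀_one_sub_one_sub (a b : ℝ) : S₀ (1 - a) (1 - b) = S₀ a b := by
  unfold S₀
  rw [sub_sub_sub_cancel_left, abs_sub_comm]
  ring_nf

open Classical in
noncomputable def reflectIfAnti (m : ℝ → ℝ) : ℝ → ℝ :=
  if StrictMono m then id else fun u => 1 - u

lemma reflectIfAnti_of_strictMono {m : ℝ → ℝ} (hm : StrictMono m) : reflectIfAnti m = id :=
  if_pos hm

lemma reflectIfAnti_of_strictAnti {m : ℝ → ℝ} (hm : StrictAnti m) :
    reflectIfAnti m = fun u => 1 - u :=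
  if_neg fun hm' => (hm' zero_lt_one).asymm (hm zero_lt_one)

lemma reflectIfAnti_eq_id_or (m : ℝ → ℝ) :
    reflectIfAnti m = id ∨ reflectIfAnti m = fun u => 1 - u := by
  unfold reflectIfAnti
  split_ifs
  exacts [Or.inl rfl, Or.inr rfl]

lemma measurableEmbedding_of_strictMono_or_strictAnti {m : ℝ → ℝ}
    (hm : StrictMono m ∨ StrictAnti m) : MeasurableEmbedding m :=
  (hm.elim (·.monotone.measurable) (·.antitone.measurable)).measurableEmbedding
    (hm.elim StrictMono.injective StrictAnti.injective)

@[fun_prop]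
lemma measurable_reflectIfAnti (m : ℝ → ℝ) : Measurable (reflectIfAnti m) := by
  rcases reflectIfAnti_eq_id_or m with h | h <;> rw [h] <;> fun_prop

lemma S₀_reflectIfAnti (m : ℝ → ℝ) (a b : ℝ) :
    S₀ (reflectIfAnti m a) (reflectIfAnti m b) = S₀ a b := by
  rcases reflectIfAnti_eq_id_or m with h | h <;> rw [h]
  · rfl
  · exact S₀_one_sub_one_sub a b

lemma abs_reflectIfAnti_sub (m : ℝ → ℝ) (a b : ℝ) :
    |reflectIfAnti m a - reflectIfAnti m b| = |a - b| := by
  rcases reflectIfAnti_eq_id_or m with h | h <;> rw [h]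
  · rfl
  · rw [sub_sub_sub_cancel_left, abs_sub_comm]

lemma Monotone.eq_of_eqOn_dense {g h : ℝ → ℝ} {D : Set ℝ} (hg : Monotone g) (hh : Continuous h)
    (hD : Dense D) (hgh : EqOn g h D) : g = h := by
  funext x
  have mem_closure_inter (I : Set ℝ) (hI : IsOpen I) (hx : x ∈ closure I) :
      x ∈ closure (I ∩ D) := by
    simpa only [closure_closure] using closure_mono (hD.open_subset_closure_inter hI) hx
  apply le_antisymm
  · refine (isClosed_le continuous_const hh).closure_subset_iff.2 ?_
      (mem_closure_inter _ isOpen_Ioi (by rw [closure_Ioi]; exact self_mem_Ici))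
    rintro y ⟨hxy, hy⟩
    exact (hg hxy.le).trans (hgh hy).le
  · refine (isClosed_le hh continuous_const).closure_subset_iff.2 ?_
      (mem_closure_inter _ isOpen_Iio (by rw [closure_Iio]; exact self_mem_Iic))
    rintro y ⟨hyx, hy⟩
    exact (hgh hy).symm.le.trans (hg hyx.le)

lemma Antitone.eq_of_eqOn_dense {g h : ℝ → ℝ} {D : Set ℝ} (hg : Antitone g) (hh : Continuous h)
    (hD : Dense D) (hgh : EqOn g h D) : g = h :=
  neg_injective (hg.neg.eq_of_eqOn_dense hh.neg hD fun _ hy => congrArg Neg.neg (hgh hy))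

lemma measure_singleton_eq_zero_of_continuousAt_cdf (ν : Measure ℝ) [IsProbabilityMeasure ν]
    {x : ℝ} (h : ContinuousAt (cdf ν) x) : ν {x} = 0 := by
  rw [← measure_cdf ν, StieltjesFunction.measure_singleton, h.continuousWithinAt.leftLim_eq,
    sub_self, ENNReal.ofReal_zero]

section CondCDF

variable {α β : Type*} [MeasurableSpace α] [MeasurableSpace β]

lemma measurable_condCDF_uncurry (ρ : Measure (α × ℝ)) (hρ : ∀ a, Continuous (condCDF ρ a)) :
    Measurable fun p : α × ℝ => condCDF ρ p.1 p.2 :=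
  (measurable_uncurry_of_continuous_of_measurable hρ (measurable_condCDF ρ)).comp measurable_swap

lemma continuous_cdf_snd (ρ : Measure (α × ℝ)) [IsProbabilityMeasure ρ]
    (hρ : ∀ a, Continuous (condCDF ρ a)) : Continuous (cdf ρ.snd) := by
  have h : ⇑(cdf ρ.snd) = fun x => ∫ a, condCDF ρ a x ∂ρ.fst := by
    funext x
    rw [cdf_eq_real, measureReal_def, Measure.snd_apply measurableSet_Iic, ← univ_prod,
      integral_condCDF, measureReal_def]
  rw [h]
  refine continuous_of_dominated (fun x => (measurable_condCDF ρ x).aestronglyMeasurable)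
    (fun x => ae_of_all _ fun a => ?_) (integrable_const 1) (ae_of_all _ hρ)
  rw [Real.norm_eq_abs, abs_of_nonneg (condCDF_nonneg ρ a x)]
  exact condCDF_le_one ρ a x

lemma measureReal_prod_Ici (ρ : Measure (α × ℝ)) [IsFiniteMeasure ρ] {x : ℝ} (hx : ρ.snd {x} = 0)
    {s : Set α} (hs : MeasurableSet s) :
    ρ.real (s ×ˢ Ici x) = ρ.fst.real s - ρ.real (s ×ˢ Iic x) := by
  have hIoi : s ×ˢ Ioi x =ᵐ[ρ] s ×ˢ Ici x :=
    (EventuallyEq.refl _ (Prod.fst ⁻¹' s)).inter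
      ((Measure.tendsto_ae_map measurable_snd.aemeasurable).eventually (Ioi_ae_eq_Ici' hx))
  have hsplit : ρ.real (s ×ˢ Iic x) + ρ.real (s ×ˢ Ioi x) = ρ.fst.real s := by
    rw [← measureReal_union (disjoint_prod.2 (Or.inr (Iic_disjoint_Ioi le_rfl)))
      (hs.prod measurableSet_Ioi), ← prod_union, Iic_union_Ioi, prod_univ, measureReal_def,
      measureReal_def, Measure.fst_apply hs]
  rw [← measureReal_congr hIoi]
  linarith

lemma MeasureTheory.Measure.fst_map_prodMap {γ δ : Type*} [MeasurableSpace γ]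
    [MeasurableSpace δ] (ρ : Measure (α × γ)) {f : α → β} {g : γ → δ} (hf : Measurable f)
    (hg : Measurable g) :
    (ρ.map (Prod.map f g)).fst = ρ.fst.map f := by
  rw [Measure.fst, Measure.fst, Measure.map_map measurable_fst (hf.prodMap hg),
    Measure.map_map hf measurable_fst]
  rfl

variable {f : α → β} {g : ℝ → ℝ}

lemma integrable_condCDF_map_prodMap (ρ : Measure (α × ℝ)) [IsFiniteMeasure ρ]
    (hf : MeasurableEmbedding f) (hg : Measurable g) (y : ℝ) :
    Integrable (fun a => condCDF (ρ.map (Prod.map f g)) (f a) y) ρ.fst := by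
  have := integrable_condCDF (ρ.map (Prod.map f g)) y
  rwa [Measure.fst_map_prodMap ρ hf.measurable hg, hf.integrable_map_iff] at this

lemma setIntegral_condCDF_map_prodMap (ρ : Measure (α × ℝ)) [IsFiniteMeasure ρ]
    (hf : MeasurableEmbedding f) (hg : Measurable g) {s : Set α} (hs : MeasurableSet s) (y : ℝ) :
    ∫ a in s, condCDF (ρ.map (Prod.map f g)) (f a) y ∂ρ.fst = ρ.real (s ×ˢ (g ⁻¹' Iic y)) := by
  have hfs : MeasurableSet (f '' s) := hf.measurableSet_image.2 hs
  calc ∫ a in s, condCDF (ρ.map (Prod.map f g)) (f a) y ∂ρ.fst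
      = ∫ b in f '' s, condCDF (ρ.map (Prod.map f g)) b y ∂(ρ.fst.map f) := by
        rw [hf.setIntegral_map, hf.injective.preimage_image]
    _ = (ρ.map (Prod.map f g)).real ((f '' s) ×ˢ Iic y) := by
        rw [← Measure.fst_map_prodMap ρ hf.measurable hg, setIntegral_condCDF _ _ hfs]
    _ = ρ.real (s ×ˢ (g ⁻¹' Iic y)) := by
        rw [map_measureReal_apply (hf.measurable.prodMap hg) (hfs.prod measurableSet_Iic),
          preimage_prod_map_prod, hf.injective.preimage_image]

/-- For each `x` the identity holds only `ρ.fst`-a.e.; continuity in `x` lets the countably many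
rational `x` carry it to all `x` at once. -/
lemma ae_condCDF_map_prodMap_of_strictMono (ρ : Measure (α × ℝ)) [IsFiniteMeasure ρ]
    (hρ : ∀ a, Continuous (condCDF ρ a)) (hf : MeasurableEmbedding f) (hg : StrictMono g) :
    ∀ᵐ a ∂ρ.fst, ∀ x, condCDF (ρ.map (Prod.map f g)) (f a) (g x) = condCDF ρ a x := by
  have h_ae (x : ℝ) :
      (fun a => condCDF (ρ.map (Prod.map f g)) (f a) (g x)) =ᵐ[ρ.fst] (condCDF ρ · x) := by
    refine ae_eq_of_forall_setIntegral_eq_of_sigmaFinite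
      (fun _ _ _ => (integrable_condCDF_map_prodMap ρ hf hg.monotone.measurable _).integrableOn)
      (fun _ _ _ => (integrable_condCDF ρ x).integrableOn) fun s hs _ => ?_
    have hpre : g ⁻¹' Iic (g x) = Iic x := by ext; simp [hg.le_iff_le]
    rw [setIntegral_condCDF_map_prodMap ρ hf hg.monotone.measurable hs, hpre,
      setIntegral_condCDF ρ x hs]
  filter_upwards [ae_all_iff.2 fun q : ℚ => h_ae q] with a ha
  refine congrFun (((condCDF _ (f a)).mono.comp hg.monotone).eq_of_eqOn_dense (hρ a)
    Rat.denseRange_cast ?_)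
  rintro _ ⟨q, rfl⟩
  exact ha q

lemma ae_condCDF_map_prodMap_of_strictAnti (ρ : Measure (α × ℝ)) [IsProbabilityMeasure ρ]
    (hρ : ∀ a, Continuous (condCDF ρ a)) (hf : MeasurableEmbedding f) (hg : StrictAnti g) :
    ∀ᵐ a ∂ρ.fst, ∀ x, condCDF (ρ.map (Prod.map f g)) (f a) (g x) = 1 - condCDF ρ a x := by
  have h_ae (x : ℝ) :
      (fun a => condCDF (ρ.map (Prod.map f g)) (f a) (g x)) =ᵐ[ρ.fst] (1 - condCDF ρ · x) := by
    refine ae_eq_of_forall_setIntegral_eq_of_sigmaFinite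
      (fun _ _ _ => (integrable_condCDF_map_prodMap ρ hf hg.antitone.measurable _).integrableOn)
      (fun _ _ _ => ((integrable_const 1).sub (integrable_condCDF ρ x)).integrableOn)
      fun s hs _ => ?_
    have hpre : g ⁻¹' Iic (g x) = Ici x := by ext; simp [hg.le_iff_ge]
    have hx : ρ.snd {x} = 0 :=
      measure_singleton_eq_zero_of_continuousAt_cdf _ (continuous_cdf_snd ρ hρ).continuousAt
    rw [setIntegral_condCDF_map_prodMap ρ hf hg.antitone.measurable hs, hpre,
      measureReal_prod_Ici ρ hx hs,
      integral_sub (integrable_const 1).integrableOn (integrable_condCDF ρ x).integrableOn,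
      setIntegral_const, setIntegral_condCDF ρ x hs, smul_eq_mul, mul_one]
  filter_upwards [ae_all_iff.2 fun q : ℚ => h_ae q] with a ha
  refine congrFun (((condCDF _ (f a)).mono.comp_antitone hg.antitone).eq_of_eqOn_dense
    (continuous_const.sub (hρ a)) Rat.denseRange_cast ?_)
  rintro _ ⟨q, rfl⟩
  exact ha q

end CondCDF

lemma ae_condCDF_comp_eq_reflectIfAnti {α β Ω : Type*} [MeasurableSpace α] [MeasurableSpace β]
    {mΩ : MeasurableSpace Ω} (μ : Measure Ω) [IsProbabilityMeasure μ] {X : Ω → ℝ} {Z : Ω → α}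
    (hX : Measurable X) (hZ : Measurable Z)
    (hXZ : ∀ z, Continuous (condCDF (μ.map fun ω => (Z ω, X ω)) z))
    {f : α → β} {g : ℝ → ℝ} (hf : MeasurableEmbedding f) (hg : StrictMono g ∨ StrictAnti g) :
    (fun ω => condCDF (μ.map fun ω => (f (Z ω), g (X ω))) (f (Z ω)) (g (X ω)))
      =ᵐ[μ] fun ω => reflectIfAnti g (condCDF (μ.map fun ω => (Z ω, X ω)) (Z ω) (X ω)) := by
  set ρ := μ.map fun ω => (Z ω, X ω)
  have := Measure.isProbabilityMeasure_map (μ := μ) (hZ.prodMk hX).aemeasurable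
  have hg_meas : Measurable g := (measurableEmbedding_of_strictMono_or_strictAnti hg).measurable
  have hmap : (μ.map fun ω => (f (Z ω), g (X ω))) = ρ.map (Prod.map f g) :=
    (Measure.map_map (hf.measurable.prodMap hg_meas) (hZ.prodMk hX)).symm
  have key : ∀ᵐ z ∂ρ.fst, ∀ x,
      condCDF (ρ.map (Prod.map f g)) (f z) (g x) = reflectIfAnti g (condCDF ρ z x) := by
    rcases hg with hg | hg
    · simpa only [reflectIfAnti_of_strictMono hg, id] using
        ae_condCDF_map_prodMap_of_strictMono ρ hXZ hf hg
    · simpa only [reflectIfAnti_of_strictAnti hg] using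
        ae_condCDF_map_prodMap_of_strictAnti ρ hXZ hf hg
  rw [Measure.fst_map_prodMk hX] at key
  filter_upwards [ae_of_ae_map hZ.aemeasurable key] with ω hω
  rw [hmap]
  exact hω (X ω)

lemma cdf_map_apply_of_strictMono (ν : Measure ℝ) [IsProbabilityMeasure ν] {m : ℝ → ℝ}
    (hm : StrictMono m) (z : ℝ) : cdf (ν.map m) (m z) = cdf ν z := by
  have := Measure.isProbabilityMeasure_map (μ := ν) hm.monotone.measurable.aemeasurable
  have hpre : m ⁻¹' Iic (m z) = Iic z := by ext; simp [hm.le_iff_le]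
  rw [cdf_eq_real, cdf_eq_real, map_measureReal_apply hm.monotone.measurable measurableSet_Iic,
    hpre]

lemma cdf_map_apply_of_strictAnti (ν : Measure ℝ) [IsProbabilityMeasure ν] {m : ℝ → ℝ}
    (hm : StrictAnti m) {z : ℝ} (hz : ν {z} = 0) : cdf (ν.map m) (m z) = 1 - cdf ν z := by
  have := Measure.isProbabilityMeasure_map (μ := ν) hm.antitone.measurable.aemeasurable
  have hpre : m ⁻¹' Iic (m z) = (Iio z)ᶜ := by ext; simp [hm.le_iff_ge]
  rw [cdf_eq_real, cdf_eq_real, map_measureReal_apply hm.antitone.measurable measurableSet_Iic,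
    hpre, measureReal_compl measurableSet_Iio, probReal_univ,
    measureReal_congr (Iio_ae_eq_Iic' hz)]

lemma cdf_comp_eq_reflectIfAnti {Ω : Type*} {mΩ : MeasurableSpace Ω} (μ : Measure Ω)
    [IsProbabilityMeasure μ] {Z : Ω → ℝ} (hZ : Measurable Z) (hZcont : Continuous (cdf (μ.map Z)))
    {m : ℝ → ℝ} (hm : StrictMono m ∨ StrictAnti m) :
    (fun ω => cdf (μ.map fun ω => m (Z ω)) (m (Z ω)))
      = fun ω => reflectIfAnti m (cdf (μ.map Z) (Z ω)) := by
  have := Measure.isProbabilityMeasure_map (μ := μ) hZ.aemeasurable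
  have hmap : (μ.map fun ω => m (Z ω)) = (μ.map Z).map m :=
    (Measure.map_map (measurableEmbedding_of_strictMono_or_strictAnti hm).measurable hZ).symm
  funext ω
  rw [hmap]
  rcases hm with hm | hm
  · rw [reflectIfAnti_of_strictMono hm, cdf_map_apply_of_strictMono _ hm, id]
  · rw [reflectIfAnti_of_strictAnti hm, cdf_map_apply_of_strictAnti _ hm
      (measure_singleton_eq_zero_of_continuousAt_cdf _ hZcont.continuousAt)]

lemma integral_map_prod_map_of_invariant {γ E : Type*} [MeasurableSpace γ] [NormedAddCommGroup E]
    [NormedSpace ℝ E] (ν : Measure γ) [SFinite ν] {σ : γ → γ} (hσ : Measurable σ)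
    {F : γ × γ → E} (hF : StronglyMeasurable F) (hinv : ∀ p q, F (σ p, σ q) = F (p, q)) :
    ∫ p, F p ∂((ν.map σ).prod (ν.map σ)) = ∫ p, F p ∂(ν.prod ν) := by
  rw [Measure.map_prod_map ν ν hσ hσ, integral_map (hσ.prodMap hσ).aemeasurable
    hF.aestronglyMeasurable]
  exact integral_congr_ae (ae_of_all _ fun p => hinv p.1 p.2)

theorem rho_invariant_strictly_monotone_general
    {Ω : Type*} {mΩ : MeasurableSpace Ω}
    (μ : Measure Ω) [IsProbabilityMeasure μ]
    (X Y Z : Ω → ℝ) (hX : Measurable X) (hY : Measurable Y) (hZ : Measurable Z)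
    (hXZcont : ∀ z : ℝ, Continuous fun x => condCDF (μ.map fun ω => (Z ω, X ω)) z x)
    (hYZcont : ∀ z : ℝ, Continuous fun y => condCDF (μ.map fun ω => (Z ω, Y ω)) z y)
    (hFZcont : Continuous fun z => cdf (μ.map Z) z)
    (m₁ m₂ m₃ : ℝ → ℝ)
    (hm₁ : StrictMono m₁ ∨ StrictAnti m₁)
    (hm₂ : StrictMono m₂ ∨ StrictAnti m₂)
    (hm₃ : StrictMono m₃ ∨ StrictAnti m₃)
    (U V W U' V' W' : Ω → ℝ)
    (hU : U = fun ω => condCDF (μ.map fun ω' => (Z ω', X ω')) (Z ω) (X ω))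
    (hV : V = fun ω => condCDF (μ.map fun ω' => (Z ω', Y ω')) (Z ω) (Y ω))
    (hW : W = fun ω => cdf (μ.map Z) (Z ω))
    (hU' : U' = fun ω =>
      condCDF (μ.map fun ω' => (m₃ (Z ω'), m₁ (X ω'))) (m₃ (Z ω)) (m₁ (X ω)))
    (hV' : V' = fun ω =>
      condCDF (μ.map fun ω' => (m₃ (Z ω'), m₂ (Y ω'))) (m₃ (Z ω)) (m₂ (Y ω)))
    (hW' : W' = fun ω => cdf (μ.map fun ω' => m₃ (Z ω')) (m₃ (Z ω)))
    (c₀ : ℝ)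
    (ν ν' : Measure (ℝ × ℝ × ℝ))
    (hν : ν = μ.map (fun ω => (U ω, V ω, W ω)))
    (hν' : ν' = μ.map (fun ω => (U' ω, V' ω, W' ω)))
    (ρ ρ' : ℝ)
    (hρ : ρ = c₀ * ∫ p : (ℝ × ℝ × ℝ) × (ℝ × ℝ × ℝ),
      S₀ p.1.1 p.2.1 * S₀ p.1.2.1 p.2.2.1 * Real.exp (-|p.1.2.2 - p.2.2.2|) ∂(ν.prod ν))
    (hρ' : ρ' = c₀ * ∫ p : (ℝ × ℝ × ℝ) × (ℝ × ℝ × ℝ),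
      S₀ p.1.1 p.2.1 * S₀ p.1.2.1 p.2.2.1 * Real.exp (-|p.1.2.2 - p.2.2.2|)
      ∂(ν'.prod ν')) :
    ρ' = ρ := by
  have hm₃_emb := measurableEmbedding_of_strictMono_or_strictAnti hm₃
  set σ := Prod.map (reflectIfAnti m₁) (Prod.map (reflectIfAnti m₂) (reflectIfAnti m₃))
  have hσ : Measurable σ := by fun_prop
  have hUVW : Measurable fun ω => (U ω, V ω, W ω) := by
    subst hU hV hW
    exact ((measurable_condCDF_uncurry _ hXZcont).comp (hZ.prodMk hX)).prodMk
      (((measurable_condCDF_uncurry _ hYZcont).comp (hZ.prodMk hY)).prodMk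
        ((monotone_cdf _).measurable.comp hZ))
  have hU'_ae : U' =ᵐ[μ] reflectIfAnti m₁ ∘ U := by
    rw [hU', hU]; exact ae_condCDF_comp_eq_reflectIfAnti μ hX hZ hXZcont hm₃_emb hm₁
  have hV'_ae : V' =ᵐ[μ] reflectIfAnti m₂ ∘ V := by
    rw [hV', hV]; exact ae_condCDF_comp_eq_reflectIfAnti μ hY hZ hYZcont hm₃_emb hm₂
  have hW'_eq : W' = reflectIfAnti m₃ ∘ W := by
    rw [hW', hW]; exact cdf_comp_eq_reflectIfAnti μ hZ hFZcont hm₃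
  have hν'_eq : ν' = ν.map σ := by
    rw [hν', hν, Measure.map_map hσ hUVW]
    refine Measure.map_congr ?_
    filter_upwards [hU'_ae, hV'_ae] with ω hUω hVω
    simp only [σ, Function.comp, Prod.map, hUω, hVω, hW'_eq]
  have : IsProbabilityMeasure ν := hν ▸ Measure.isProbabilityMeasure_map hUVW.aemeasurable
  rw [hρ', hρ, hν'_eq, integral_map_prod_map_of_invariant ν hσ
    (by unfold S₀; fun_prop : Continuous _).stronglyMeasurable fun p q => by
      simp only [σ, Prod.map, S₀_reflectIfAnti, abs_reflectIfAnti_sub]]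

/-- (Theorem 1(3) of the paper.) For any strictly monotone
transformations `m₁, m₂, m₃ : ℝ → ℝ` (each either strictly increasing or strictly
decreasing), `ρ(m₁(X), m₂(Y) | m₃(Z)) = ρ(X, Y | Z)`. -/
theorem rho_invariant_strictly_monotone
    {Ω : Type*} {mΩ : MeasurableSpace Ω}
    (μ : Measure Ω) [IsProbabilityMeasure μ]
    (X Y Z : Ω → ℝ) (hX : Measurable X) (hY : Measurable Y) (hZ : Measurable Z)
    (hXZcont : ∀ z : ℝ, Continuous fun x => condCDF (μ.map fun ω => (Z ω, X ω)) z x)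
    (hYZcont : ∀ z : ℝ, Continuous fun y => condCDF (μ.map fun ω => (Z ω, Y ω)) z y)
    (hFZcont : Continuous fun z => cdf (μ.map Z) z)
    (m₁ m₂ m₃ : ℝ → ℝ)
    (hm₁ : StrictMono m₁ ∨ StrictAnti m₁)
    (hm₂ : StrictMono m₂ ∨ StrictAnti m₂)
    (hm₃ : StrictMono m₃ ∨ StrictAnti m₃)
    (U V W U' V' W' : Ω → ℝ)
    (hU : U = fun ω => condCDF (μ.map fun ω' => (Z ω', X ω')) (Z ω) (X ω))
    (hV : V = fun ω => condCDF (μ.map fun ω' => (Z ω', Y ω')) (Z ω) (Y ω))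
    (hW : W = fun ω => cdf (μ.map Z) (Z ω))
    (hU' : U' = fun ω =>
      condCDF (μ.map fun ω' => (m₃ (Z ω'), m₁ (X ω'))) (m₃ (Z ω)) (m₁ (X ω)))
    (hV' : V' = fun ω =>
      condCDF (μ.map fun ω' => (m₃ (Z ω'), m₂ (Y ω'))) (m₃ (Z ω)) (m₂ (Y ω)))
    (hW' : W' = fun ω => cdf (μ.map fun ω' => m₃ (Z ω')) (m₃ (Z ω)))
    (c₀ : ℝ) (hc₀ : c₀ = (13 * Real.exp (-3) - 40 * Real.exp (-2) + 13 * Real.exp (-1))⁻¹)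
    (ν ν' : Measure (ℝ × ℝ × ℝ))
    (hν : ν = μ.map (fun ω => (U ω, V ω, W ω)))
    (hν' : ν' = μ.map (fun ω => (U' ω, V' ω, W' ω)))
    (ρ ρ' : ℝ)
    (hρ : ρ = c₀ * ∫ p : (ℝ × ℝ × ℝ) × (ℝ × ℝ × ℝ),
      S₀ p.1.1 p.2.1 * S₀ p.1.2.1 p.2.2.1 * Real.exp (-|p.1.2.2 - p.2.2.2|) ∂(ν.prod ν))
    (hρ' : ρ' = c₀ * ∫ p : (ℝ × ℝ × ℝ) × (ℝ × ℝ × ℝ),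
      S₀ p.1.1 p.2.1 * S₀ p.1.2.1 p.2.2.1 * Real.exp (-|p.1.2.2 - p.2.2.2|)
      ∂(ν'.prod ν')) :
    ρ' = ρ :=
  rho_invariant_strictly_monotone_general (mΩ := mΩ) μ X Y Z hX hY hZ hXZcont hYZcont hFZcont m₁ m₂
    m₃ hm₁ hm₂ hm₃ U V W U' V' W' hU hV hW hU' hV' hW' c₀ ν ν' hν hν' ρ ρ' hρ hρ'
end

section
/- Let X, Y, Z be discrete real-valued random variables (each supported on a countable set), let U_X be a Uniform(0,1) random variable independent of (X,Y,Z), and define U = (1−U_X)·F_{X|Z}(X⁻|Z) + U_X·F_{X|Z}(X|Z). Then X is conditionally independent of Y given Z if and only if U is conditionally independent of Y given Z. -/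
/-!
Forward direction: `U` is a measurable function of `(U_X, (Z, X))`, and since `U_X` is independent
of `(X, Y, Z)`, adjoining it to `(Z, X)` preserves conditional independence from `Y` given `Z`.

Backward direction: because `X` is discrete, almost surely `X` is an atom of its conditional law
given `Z`, i.e. `F(X⁻|Z) < F(X|Z)`; as `U_X ∈ (0, 1)`, `U` then lies in `(F(X⁻|Z), F(X|Z)]`.
For fixed `z` these intervals are pairwise disjoint as `x` varies, so `X` can be read off `(Z, U)`
by a measurable map, and conditional independence passes from `(Z, U)` to `X`.
-/

open MeasureTheory ProbabilityTheory Set Filter Function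

lemma Monotone.pairwise_disjoint_Ioc_leftLim {α β : Type*} [LinearOrder α]
    [ConditionallyCompleteLinearOrder β] [TopologicalSpace β] [OrderTopology β]
    {f : α → β} (hf : Monotone f) :
    Pairwise (Disjoint on fun x => Ioc (leftLim f x) (f x)) := by
  have key : ∀ ⦃x y u⦄, x < y → u ∈ Ioc (leftLim f x) (f x) → u ∉ Ioc (leftLim f y) (f y) :=
    fun x y u hxy hx hy => ((hx.2.trans (hf.le_leftLim hxy)).trans_lt hy.1).false
  intro x y hxy
  refine Set.disjoint_left.2 fun u hx hy => ?_
  rcases hxy.lt_or_gt with h | h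
  exacts [key h hx hy, key h hy hx]

lemma exists_measurable_eq_of_pairwiseDisjoint {α β : Type*} [MeasurableSpace α]
    [MeasurableSpace β] {S : Set β} (hS : S.Countable) (hSne : S.Nonempty) {G : β → Set α}
    (hG : ∀ x ∈ S, MeasurableSet (G x)) (hdisj : S.PairwiseDisjoint G) :
    ∃ g : α → β, Measurable g ∧ ∀ x ∈ S, ∀ a ∈ G x, g a = x := by
  classical
  obtain ⟨e, rfl⟩ := hS.exists_eq_range hSne
  have hGe : ∀ n, MeasurableSet (G (e n)) := fun n => hG _ ⟨n, rfl⟩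
  have hex : ∀ a, ∃ n, a ∈ G (e n) ∨ a ∉ ⋃ k, G (e k) := fun a => by
    by_cases ha : a ∈ ⋃ k, G (e k)
    · obtain ⟨n, hn⟩ := mem_iUnion.1 ha
      exact ⟨n, .inl hn⟩
    · exact ⟨0, .inr ha⟩
  refine ⟨fun a => e (Nat.find (hex a)),
    Measurable.find (p := fun n a => a ∈ G (e n) ∨ a ∉ ⋃ k, G (e k)) (fun _ => measurable_const)
      (fun n => (hGe n).union (MeasurableSet.iUnion hGe).compl) hex, ?_⟩
  rintro _ ⟨n, rfl⟩ a ha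
  have hmem : a ∈ G (e (Nat.find (hex a))) :=
    (Nat.find_spec (hex a)).resolve_right (not_not.2 (mem_iUnion.2 ⟨n, ha⟩))
  by_contra hne
  exact Set.disjoint_left.1 (hdisj ⟨_, rfl⟩ ⟨n, rfl⟩ hne) hmem ha

lemma MeasureTheory.Measure.ae_compProd_measure_singleton_ne_zero {α β : Type*}
    [MeasurableSpace α] [MeasurableSpace β] [MeasurableSingletonClass β]
    (μ : Measure α) [SFinite μ] (κ : Kernel α β) [IsSFiniteKernel κ] {S : Set β}
    (hS : S.Countable) :
    ∀ᵐ p ∂(μ ⊗ₘ κ), p.2 ∈ S → κ p.1 {p.2} ≠ 0 := by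
  have h : ∀ x ∈ S, ∀ᵐ p ∂(μ ⊗ₘ κ), p.2 = x → κ p.1 {x} ≠ 0 := fun x _ => by
    refine Measure.ae_compProd_of_ae_ae ?_ (ae_of_all _ fun a => ?_)
    · exact ((measurableSet_singleton x).preimage measurable_snd).imp
        ((κ.measurable_coe (measurableSet_singleton x) (measurableSet_singleton 0)).compl.preimage
          measurable_fst)
    · by_cases ha : κ a {x} = 0
      · filter_upwards [measure_eq_zero_iff_ae_notMem.1 ha] with b hb hbx
        exact absurd hbx hb
      · exact ae_of_all _ fun _ _ => ha
  filter_upwards [(ae_ball_iff hS).2 h] with p hp hpS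
  exact hp _ hpS rfl

namespace ProbabilityTheory

section CondIndep

variable {Ω β γ δ : Type*} {m' : MeasurableSpace Ω} {mΩ : MeasurableSpace Ω}
  {μ : Measure Ω} [IsFiniteMeasure μ] [MeasurableSpace β] [MeasurableSpace γ]
  [MeasurableSpace δ]

lemma condExp_inter_preimage_of_indepFun {W : Ω → β} {T : Ω → γ}
    (hW : Measurable W) (hT : Measurable T) (hWT : IndepFun W T μ)
    (hm'T : m' ≤ MeasurableSpace.comap T inferInstance) {A : Set β} {E : Set γ}
    (hA : MeasurableSet A) (hE : MeasurableSet E) :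
    μ⟦W ⁻¹' A ∩ T ⁻¹' E | m'⟧ =ᵐ[μ] μ.real (W ⁻¹' A) • μ⟦T ⁻¹' E | m'⟧ := by
  set mT := MeasurableSpace.comap T inferInstance
  have hmT : mT ≤ mΩ := hT.comap_le
  have hW_mT : μ⟦W ⁻¹' A | mT⟧ =ᵐ[μ] fun _ => μ.real (W ⁻¹' A) := by
    have := condExp_indep_eq hW.comap_le hmT
      (stronglyMeasurable_const (b := (1 : ℝ)).indicator ⟨A, hA, rfl⟩) hWT
    rwa [integral_indicator_const _ (hW hA), smul_eq_mul, mul_one] at this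
  have h_mT : μ⟦W ⁻¹' A ∩ T ⁻¹' E | mT⟧ =ᵐ[μ]
      μ.real (W ⁻¹' A) • (T ⁻¹' E).indicator fun _ => (1 : ℝ) := by
    rw [inter_comm, ← indicator_indicator]
    filter_upwards [condExp_indicator ((integrable_const (1 : ℝ)).indicator (hW hA))
        (show MeasurableSet[mT] (T ⁻¹' E) from ⟨E, hE, rfl⟩), hW_mT] with ω h1 h2
    by_cases hω : ω ∈ T ⁻¹' E <;> simp [h1, h2, hω]
  calc μ⟦W ⁻¹' A ∩ T ⁻¹' E | m'⟧
      =ᵐ[μ] μ[μ⟦W ⁻¹' A ∩ T ⁻¹' E | mT⟧ | m'] := (condExp_condExp_of_le hm'T hmT).symm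
    _ =ᵐ[μ] μ[μ.real (W ⁻¹' A) • (T ⁻¹' E).indicator fun _ => (1 : ℝ) | m'] :=
      condExp_congr_ae h_mT
    _ =ᵐ[μ] μ.real (W ⁻¹' A) • μ⟦T ⁻¹' E | m'⟧ := condExp_smul _ _ _

variable [StandardBorelSpace Ω] {hm' : m' ≤ mΩ}

lemma condIndepFun_prodMk_left_of_condExp_eq_mul {f : Ω → β} {h : Ω → γ} {g : Ω → δ}
    (hf : Measurable f) (hh : Measurable h) (hg : Measurable g)
    (hfhg : ∀ A B C, MeasurableSet A → MeasurableSet B → MeasurableSet C →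
      μ⟦f ⁻¹' A ∩ h ⁻¹' B ∩ g ⁻¹' C | m'⟧ =ᵐ[μ] μ⟦f ⁻¹' A ∩ h ⁻¹' B | m'⟧ * μ⟦g ⁻¹' C | m'⟧) :
    CondIndepFun m' hm' (fun ω => (f ω, h ω)) g μ := by
  rw [condIndepFun_iff_condIndep]
  refine CondIndepSets.condIndep (hf.prodMk hh).comap_le hg.comap_le
    (isPiSystem_prod.comap _) (MeasurableSpace.isPiSystem_measurableSet.comap g)
    (by rw [← generateFrom_prod, MeasurableSpace.comap_generateFrom]; rfl)
    (MeasurableSpace.comap_eq_generateFrom _ _) ?_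
  rw [condIndepSets_iff]
  rotate_left
  · rintro _ ⟨_, ⟨A, hA, B, hB, rfl⟩, rfl⟩
    exact (hf.prodMk hh) (hA.prod hB)
  · rintro _ ⟨C, hC, rfl⟩
    exact hg hC
  rintro _ _ ⟨_, ⟨A, hA, B, hB, rfl⟩, rfl⟩ ⟨C, hC, rfl⟩
  exact hfhg A B C hA hB hC

lemma CondIndepFun.prodMk_left_of_measurable {f : Ω → β} {h : Ω → γ} {g : Ω → δ}
    (hfg : CondIndepFun m' hm' f g μ) (hf : Measurable f) (hh : Measurable[m'] h)
    (hg : Measurable g) : CondIndepFun m' hm' (fun ω => (h ω, f ω)) g μ := by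
  refine condIndepFun_prodMk_left_of_condExp_eq_mul (hh.mono hm' le_rfl) hf hg
    fun B A C hB hA hC => ?_
  have pull : ∀ s, MeasurableSet s →
      μ⟦h ⁻¹' B ∩ s | m'⟧ =ᵐ[μ] (h ⁻¹' B).indicator (μ⟦s | m'⟧) := fun s hs => by
    rw [← indicator_indicator]
    exact condExp_indicator ((integrable_const (1 : ℝ)).indicator hs) (hh hB)
  rw [inter_assoc]
  filter_upwards [pull _ ((hf hA).inter (hg hC)), pull _ (hf hA),
    (condIndepFun_iff_condExp_inter_preimage_eq_mul hf hg).1 hfg A C hA hC] with ω h1 h2 h3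
  by_cases hω : ω ∈ h ⁻¹' B <;> simp [h1, h2, h3, hω]

lemma CondIndepFun.prodMk_left_of_indepFun {W : Ω → β} {V : Ω → γ} {g : Ω → δ}
    (hVg : CondIndepFun m' hm' V g μ) (hW : Measurable W) (hV : Measurable V)
    (hg : Measurable g) (hWVg : IndepFun W (fun ω => (V ω, g ω)) μ)
    (hm'Vg : m' ≤ MeasurableSpace.comap (fun ω => (V ω, g ω)) inferInstance) :
    CondIndepFun m' hm' (fun ω => (W ω, V ω)) g μ := by
  refine condIndepFun_prodMk_left_of_condExp_eq_mul hW hV hg fun A B C hA hB hC => ?_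
  have h1 := condExp_inter_preimage_of_indepFun hW (hV.prodMk hg) hWVg hm'Vg hA (hB.prod hC)
  have h2 := condExp_inter_preimage_of_indepFun hW (hV.prodMk hg) hWVg hm'Vg hA
    (hB.prod MeasurableSet.univ)
  simp only [mk_preimage_prod, preimage_univ, inter_univ] at h1 h2
  rw [inter_assoc]
  filter_upwards [h1, h2,
    (condIndepFun_iff_condExp_inter_preimage_eq_mul hV hg).1 hVg B C hB hC] with ω h1 h2 h3
  simp [h1, h2, h3, mul_assoc]

lemma CondIndepFun.congr_left {f f' : Ω → β} {g : Ω → γ} (hfg : CondIndepFun m' hm' f g μ)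
    (hff' : f =ᵐ[μ] f') : CondIndepFun m' hm' f' g μ :=
  Kernel.IndepFun.congr' hfg
    (Measure.ae_ae_of_ae_comp (by rwa [condExpKernel_comp_trim]))
    (ae_of_all _ fun _ => EventuallyEq.rfl)

end CondIndep

section CondCDF

variable {α : Type*} [MeasurableSpace α]

/-- Unlike `Measure.condKernel`, this kernel is built directly from `condCDF`, so its values
on `Iic x`, `Iio x` and `{x}` are read off `condCDF` and its left limits. -/
noncomputable def condCDFKernel (ρ : Measure (α × ℝ)) : Kernel α ℝ :=
  ⟨fun a => (condCDF ρ a).measure, measurable_measure_condCDF ρ⟩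

instance (ρ : Measure (α × ℝ)) : IsMarkovKernel (condCDFKernel ρ) :=
  ⟨fun a => instIsProbabilityMeasureCondCDF ρ a⟩

lemma condCDFKernel_singleton (ρ : Measure (α × ℝ)) (a : α) (x : ℝ) :
    condCDFKernel ρ a {x} = ENNReal.ofReal (condCDF ρ a x - leftLim (condCDF ρ a) x) :=
  (condCDF ρ a).measure_singleton x

lemma fst_compProd_condCDFKernel (ρ : Measure (α × ℝ)) [IsFiniteMeasure ρ] :
    ρ.fst ⊗ₘ condCDFKernel ρ = ρ := by
  have h := compProd_toKernel (isCondKernelCDF_condCDF ρ)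
  have : Kernel.prodMkLeft Unit (condCDFKernel ρ) = (isCondKernelCDF_condCDF ρ).toKernel := by
    ext p : 1; rfl
  rw [Measure.compProd, this, h]
  rfl

lemma ae_leftLim_condCDF_lt (ρ : Measure (α × ℝ)) [IsFiniteMeasure ρ] {S : Set ℝ}
    (hS : S.Countable) :
    ∀ᵐ p ∂ρ, p.2 ∈ S → leftLim (condCDF ρ p.1) p.2 < condCDF ρ p.1 p.2 := by
  have h := Measure.ae_compProd_measure_singleton_ne_zero ρ.fst (condCDFKernel ρ) hS
  rw [fst_compProd_condCDFKernel] at h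
  filter_upwards [h] with p hp hpS
  simpa [condCDFKernel_singleton] using hp hpS

lemma leftLim_condCDF_nonneg (ρ : Measure (α × ℝ)) (a : α) (x : ℝ) :
    0 ≤ leftLim (condCDF ρ a) x :=
  (condCDF_nonneg ρ a (x - 1)).trans ((condCDF ρ a).mono.le_leftLim (sub_one_lt x))

lemma Kernel.measurable_apply_Iic (κ : Kernel α ℝ) [IsSFiniteKernel κ] :
    Measurable fun p : α × ℝ => κ p.1 (Iic p.2) :=
  (Kernel.prodMkRight ℝ κ).measurable_kernel_prodMk_left
    (measurableSet_le measurable_snd measurable_fst.snd)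

lemma Kernel.measurable_apply_Iio (κ : Kernel α ℝ) [IsSFiniteKernel κ] :
    Measurable fun p : α × ℝ => κ p.1 (Iio p.2) :=
  (Kernel.prodMkRight ℝ κ).measurable_kernel_prodMk_left
    (measurableSet_lt measurable_snd measurable_fst.snd)

lemma measurable_condCDF_uncurry (ρ : Measure (α × ℝ)) :
    Measurable fun p : α × ℝ => condCDF ρ p.1 p.2 := by
  simpa only [condCDFKernel, Kernel.coe_mk, measure_condCDF_Iic,
    ENNReal.toReal_ofReal (condCDF_nonneg _ _ _)] using
    (condCDFKernel ρ).measurable_apply_Iic.ennreal_toReal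

lemma measurable_leftLim_condCDF_uncurry (ρ : Measure (α × ℝ)) :
    Measurable fun p : α × ℝ => leftLim (condCDF ρ p.1) p.2 := by
  simpa only [condCDFKernel, Kernel.coe_mk, (condCDF _ _).measure_Iio (tendsto_condCDF_atBot _ _),
    sub_zero, ENNReal.toReal_ofReal (leftLim_condCDF_nonneg _ _ _)] using
    (condCDFKernel ρ).measurable_apply_Iio.ennreal_toReal

noncomputable def randomizedCondCDF (ρ : Measure (α × ℝ)) (u : ℝ) (a : α) (x : ℝ) : ℝ :=
  (1 - u) * leftLim (condCDF ρ a) x + u * condCDF ρ a x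

lemma measurable_randomizedCondCDF (ρ : Measure (α × ℝ)) :
    Measurable fun q : ℝ × α × ℝ => randomizedCondCDF ρ q.1 q.2.1 q.2.2 :=
  ((measurable_const.sub measurable_fst).mul
      ((measurable_leftLim_condCDF_uncurry ρ).comp measurable_snd)).add
    (measurable_fst.mul ((measurable_condCDF_uncurry ρ).comp measurable_snd))

lemma randomizedCondCDF_mem_Ioc {ρ : Measure (α × ℝ)} {u x : ℝ} {a : α} (hu : u ∈ Ioo 0 1)
    (hjump : leftLim (condCDF ρ a) x < condCDF ρ a x) :
    randomizedCondCDF ρ u a x ∈ Ioc (leftLim (condCDF ρ a) x) (condCDF ρ a x) := by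
  obtain ⟨hu0, hu1⟩ := hu
  constructor <;> unfold randomizedCondCDF <;> nlinarith

lemma exists_measurable_ae_eq_comp_randomizedCondCDF {Ω : Type*} {mΩ : MeasurableSpace Ω}
    {μ : Measure Ω} [IsProbabilityMeasure μ] {X V : Ω → ℝ} {Z : Ω → α}
    (hX : Measurable X) (hZ : Measurable Z) (hXd : ∃ S : Set ℝ, S.Countable ∧ μ (X ⁻¹' S) = 1)
    (hV : ∀ᵐ ω ∂μ, V ω ∈ Ioo 0 1) :
    ∃ g : α × ℝ → ℝ, Measurable g ∧ X =ᵐ[μ]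
      fun ω => g (Z ω, randomizedCondCDF (μ.map fun ω => (Z ω, X ω)) (V ω) (Z ω) (X ω)) := by
  set ρ := μ.map fun ω => (Z ω, X ω)
  obtain ⟨S, hS, hXS⟩ := hXd
  have hSne : S.Nonempty := by
    by_contra! h
    simp [h] at hXS
  let G : ℝ → Set (α × ℝ) := fun x =>
    {p | p.2 ∈ Ioc (leftLim (condCDF ρ p.1) x) (condCDF ρ p.1 x)}
  have hG : ∀ x, MeasurableSet (G x) := fun x =>
    (measurableSet_lt ((measurable_leftLim_condCDF_uncurry ρ).comp
        (measurable_fst.prodMk measurable_const)) measurable_snd).inter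
      (measurableSet_le measurable_snd
        ((measurable_condCDF_uncurry ρ).comp (measurable_fst.prodMk measurable_const)))
  have hdisj : S.PairwiseDisjoint G := fun x _ y _ hxy => Set.disjoint_left.2 fun p hx hy =>
    Set.disjoint_left.1 ((condCDF ρ p.1).mono.pairwise_disjoint_Ioc_leftLim hxy) hx hy
  obtain ⟨g, hg, hgG⟩ := exists_measurable_eq_of_pairwiseDisjoint hS hSne (fun x _ => hG x) hdisj
  refine ⟨g, hg, ?_⟩
  have hXS' : ∀ᵐ ω ∂μ, X ω ∈ S :=
    (ae_iff_measure_eq (hX hS.measurableSet).nullMeasurableSet).2 (by rwa [measure_univ])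
  filter_upwards [hXS', hV,
    ae_of_ae_map (hZ.prodMk hX).aemeasurable (ae_leftLim_condCDF_lt ρ hS)] with ω hxS hv hjump
  exact (hgG _ hxS _ (randomizedCondCDF_mem_Ioc hv (hjump hxS))).symm

end CondCDF

end ProbabilityTheory

theorem discrete_condIndep_iff_transform_condIndep_general
    {Ω : Type*} {mΩ : MeasurableSpace Ω} [StandardBorelSpace Ω]
    (μ : Measure Ω) [IsProbabilityMeasure μ]
    (X Y Z : Ω → ℝ) (hX : Measurable X) (hY : Measurable Y) (hZ : Measurable Z)
    -- `X`, `Y`, `Z` are discrete (supported on countable sets)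
    (hXd : ∃ S : Set ℝ, S.Countable ∧ μ (X ⁻¹' S) = 1)
    (UX : Ω → ℝ) (hUX : Measurable UX)
    (hUXu : μ.map UX = volume.restrict (Ioo (0 : ℝ) 1))
    (hind : IndepFun UX (fun ω => (X ω, Y ω, Z ω)) μ)
    (U : Ω → ℝ)
    (hU : U = fun ω =>
      (1 - UX ω) *
          Function.leftLim (fun x => condCDF (μ.map fun ω' => (Z ω', X ω')) (Z ω) x) (X ω) +
        UX ω * condCDF (μ.map fun ω' => (Z ω', X ω')) (Z ω) (X ω)) :
    CondIndepFun (MeasurableSpace.comap Z inferInstance) hZ.comap_le X Y μ ↔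
      CondIndepFun (MeasurableSpace.comap Z inferInstance) hZ.comap_le U Y μ := by
  set ρ := μ.map fun ω => (Z ω, X ω)
  obtain rfl : U = fun ω => randomizedCondCDF ρ (UX ω) (Z ω) (X ω) := hU
  have hZZ : Measurable[MeasurableSpace.comap Z inferInstance] Z := comap_measurable Z
  constructor
  · intro hXY
    have hind' : IndepFun UX (fun ω => ((Z ω, X ω), Y ω)) μ :=
      hind.comp (ψ := fun p : ℝ × ℝ × ℝ => ((p.2.2, p.1), p.2.1)) measurable_id (by fun_prop)
    have hσZ : MeasurableSpace.comap Z inferInstance ≤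
        MeasurableSpace.comap (fun ω => ((Z ω, X ω), Y ω)) inferInstance :=
      (measurable_fst.fst.comp (comap_measurable fun ω => ((Z ω, X ω), Y ω))).comap_le
    exact ((hXY.prodMk_left_of_measurable hX hZZ hY).prodMk_left_of_indepFun hUX
      (hZ.prodMk hX) hY hind' hσZ).comp (measurable_randomizedCondCDF ρ) measurable_id
  · intro hUY
    have hUX01 : ∀ᵐ ω ∂μ, UX ω ∈ Ioo 0 1 :=
      ae_of_ae_map hUX.aemeasurable (by rw [hUXu]; exact ae_restrict_mem measurableSet_Ioo)
    obtain ⟨g, hg, hXg⟩ := exists_measurable_ae_eq_comp_randomizedCondCDF hX hZ hXd hUX01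
    have hU := (measurable_randomizedCondCDF ρ).comp (hUX.prodMk (hZ.prodMk hX))
    exact ((hUY.prodMk_left_of_measurable hU hZZ hY).comp hg measurable_id).congr_left hXg.symm

/-- Let `X, Y, Z` be discrete real random variables, `U_X` a
`Uniform(0,1)` random variable independent of `(X,Y,Z)`, and
`U = (1−U_X) F_{X|Z}(X⁻|Z) + U_X F_{X|Z}(X|Z)` the randomized conditional probability
integral transform. Then `X ⫫ Y | Z` if and only if `U ⫫ Y | Z`. -/
theorem discrete_condIndep_iff_transform_condIndep
    {Ω : Type*} {mΩ : MeasurableSpace Ω} [StandardBorelSpace Ω] [Nonempty Ω]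
    (μ : Measure Ω) [IsProbabilityMeasure μ]
    (X Y Z : Ω → ℝ) (hX : Measurable X) (hY : Measurable Y) (hZ : Measurable Z)
    -- `X`, `Y`, `Z` are discrete (supported on countable sets)
    (hXd : ∃ S : Set ℝ, S.Countable ∧ μ (X ⁻¹' S) = 1)
    (hYd : ∃ S : Set ℝ, S.Countable ∧ μ (Y ⁻¹' S) = 1)
    (hZd : ∃ S : Set ℝ, S.Countable ∧ μ (Z ⁻¹' S) = 1)
    (UX : Ω → ℝ) (hUX : Measurable UX)
    (hUXu : μ.map UX = volume.restrict (Ioo (0 : ℝ) 1))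
    (hind : IndepFun UX (fun ω => (X ω, Y ω, Z ω)) μ)
    (U : Ω → ℝ)
    (hU : U = fun ω =>
      (1 - UX ω) *
          Function.leftLim (fun x => condCDF (μ.map fun ω' => (Z ω', X ω')) (Z ω) x) (X ω) +
        UX ω * condCDF (μ.map fun ω' => (Z ω', X ω')) (Z ω) (X ω)) :
    CondIndepFun (MeasurableSpace.comap Z inferInstance) hZ.comap_le X Y μ ↔
      CondIndepFun (MeasurableSpace.comap Z inferInstance) hZ.comap_le U Y μ :=
  discrete_condIndep_iff_transform_condIndep_general (mΩ := mΩ) μ X Y Z hX hY hZ hXd UX hUX hUXu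
    hind U hU
end
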